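/- Let k ≥ 2 be an integer and set U(t) = ( t(1+t)/(1−t) )^{1/(k+1)} for t ∈ (0,1). Then p(1) = −2 ∫₀¹ ((2k+1)t − k + 1)/U(t) dt, this integral equals ∫₀¹ t((2k+1)t + 3)/( k(1+t) U(t) ) dt, and consequently p(1) < 0. -/

import Mathlib

open Real MeasureTheory Set intervalIntegral Filter

noncomputable def Wfn (k : ℕ) (r t : ℝ) : ℝ :=
  (t * (t + r ^ 2) / (1 - t)) ^ ((1 : ℝ) / ((k : ℝ) + 1))

noncomputable def a₀ (k : ℕ) (r : ℝ) : ℝ :=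
  -((k : ℝ) + 1) * ((k : ℝ) + 2) * r ^ 2 + 2 * (k : ℝ) * ((k : ℝ) + 2) * r - (k : ℝ) * ((k : ℝ) - 1)

noncomputable def a₁ (k : ℕ) : ℝ := 2 * (2 * (k : ℝ) + 1)

noncomputable def periodP (k : ℕ) (r : ℝ) : ℝ :=
  |r| ^ (-(2 * (k : ℝ)) / ((k : ℝ) + 1)) *
    ∫ t in (0 : ℝ)..1, (a₀ k r - a₁ k * t) / Wfn k r t

noncomputable def Ufn (k : ℕ) (t : ℝ) : ℝ :=
  (t * (1 + t) / (1 - t)) ^ ((1 : ℝ) / ((k : ℝ) + 1))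

open Topology

lemma vpos {t : ℝ} (ht : t ∈ Ioo (0:ℝ) 1) : 0 < t * (1 + t) / (1 - t) := by
  obtain ⟨h0, h1⟩ := ht
  apply div_pos (by nlinarith) (by linarith)

lemma Upos (k : ℕ) {t : ℝ} (ht : t ∈ Ioo (0:ℝ) 1) : 0 < Ufn k t :=
  Real.rpow_pos_of_pos (vpos ht) _

lemma t_div_U (k : ℕ) {t : ℝ} (ht : t ∈ Ioo (0:ℝ) 1) :
    t / Ufn k t = (t ^ k * (1 - t) / (1 + t)) ^ ((1 : ℝ) / ((k : ℝ) + 1)) := by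
  obtain ⟨h0, h1⟩ := ht
  have hk1 : ((k : ℝ) + 1) ≠ 0 := by positivity
  have hexp : ((k + 1 : ℕ) : ℝ) * ((1 : ℝ) / ((k : ℝ) + 1)) = 1 := by
    push_cast; field_simp
  have ht' : t = ((t ^ (k + 1) : ℝ)) ^ ((1 : ℝ) / ((k : ℝ) + 1)) := by
    rw [← Real.rpow_natCast t (k + 1), ← Real.rpow_mul h0.le, hexp, Real.rpow_one]
  have hv : (0:ℝ) ≤ t * (1 + t) / (1 - t) := (vpos ⟨h0, h1⟩).le
  calc t / Ufn k t = (t ^ (k+1) / (t * (1 + t) / (1 - t))) ^ ((1 : ℝ) / ((k : ℝ) + 1)) := by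
        rw [Real.div_rpow (by positivity) hv]
        rw [← ht']; rfl
    _ = (t ^ k * (1 - t) / (1 + t)) ^ ((1 : ℝ) / ((k : ℝ) + 1)) := by
        congr 1
        field_simp
        ring


noncomputable def Gfn (k : ℕ) (t : ℝ) : ℝ :=
  (t ^ k * (1 - t) / (1 + t)) ^ ((1 : ℝ) / ((k : ℝ) + 1)) *
    (((2 * (k : ℝ) + 1) * t + 3) / ((k : ℝ) * (1 + t)))

lemma F2_eq_G (k : ℕ) (hk : 2 ≤ k) :
    EqOn (fun t => t * ((2 * (k : ℝ) + 1) * t + 3) / ((k : ℝ) * (1 + t) * Ufn k t))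
      (Gfn k) (Icc 0 1) := by
  intro t ht
  have hq : (0:ℝ) < (1 : ℝ) / ((k : ℝ) + 1) := by positivity
  have hk0 : k ≠ 0 := by omega
  have hqne : (((k:ℝ) + 1)⁻¹ : ℝ) ≠ 0 := by positivity
  rcases eq_or_lt_of_le ht.1 with h0 | h0
  · simp [Gfn, ← h0, Real.zero_rpow hqne, zero_pow hk0, one_div]
  rcases eq_or_lt_of_le ht.2 with h1 | h1
  · simp [Gfn, h1, Ufn, Real.zero_rpow hqne, one_div]
  · have hU := (Upos k ⟨h0, h1⟩).ne'
    have h1t : (1:ℝ) + t ≠ 0 := by linarith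
    have hkR : ((k:ℝ)) ≠ 0 := by positivity
    simp only [Gfn, ← t_div_U k ⟨h0, h1⟩]
    field_simp

lemma Gcont (k : ℕ) (hk : 2 ≤ k) : ContinuousOn (Gfn k) (Icc 0 1) := by
  have hq : (0:ℝ) ≤ (1 : ℝ) / ((k : ℝ) + 1) := by positivity
  have h1t : ∀ x ∈ Icc (0:ℝ) 1, (1:ℝ) + x ≠ 0 := fun x hx => by
    have := hx.1; intro h; linarith
  apply ContinuousOn.mul
  · apply ContinuousOn.rpow_const
    · exact (((continuous_pow k).mul (continuous_const.sub continuous_id)).continuousOn).div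
        (continuous_const.add continuous_id).continuousOn h1t
    · exact fun x _ => Or.inr hq
  · apply ContinuousOn.div
    · exact ((continuous_const.mul continuous_id).add continuous_const).continuousOn
    · exact (continuous_const.mul (continuous_const.add continuous_id)).continuousOn
    · intro x hx
      have hkR : (0:ℝ) < (k:ℝ) := by exact_mod_cast Nat.pos_of_ne_zero (by omega)
      exact mul_ne_zero hkR.ne' (h1t x hx)

lemma F2int (k : ℕ) (hk : 2 ≤ k) :
    IntervalIntegrable (fun t => t * ((2 * (k : ℝ) + 1) * t + 3) / ((k : ℝ) * (1 + t) * Ufn k t))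
      volume 0 1 := by
  have := ((Gcont k hk).congr (F2_eq_G k hk))
  exact this.intervalIntegrable_of_Icc zero_le_one


lemma F1int (k : ℕ) (hk : 2 ≤ k) :
    IntervalIntegrable (fun t => ((2 * (k : ℝ) + 1) * t - (k : ℝ) + 1) / Ufn k t)
      volume 0 1 := by
  set q : ℝ := (1 : ℝ) / ((k : ℝ) + 1) with hqdef
  have hq : 0 < q := by positivity
  have hq1 : -1 < -q := by
    have : q < 1 := by
      rw [hqdef, div_lt_one (by positivity)]
      have : (2:ℝ) ≤ (k:ℝ) := by exact_mod_cast hk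
      linarith
    linarith
  have hmaj : IntervalIntegrable (fun t : ℝ => 3 * (k : ℝ) * t ^ (-q)) volume 0 1 :=
    (intervalIntegrable_rpow' hq1).const_mul _
  rw [intervalIntegrable_iff_integrableOn_Ioo_of_le zero_le_one] at hmaj ⊢
  apply MeasureTheory.Integrable.mono hmaj
  · -- measurability
    apply Measurable.aestronglyMeasurable
    unfold Ufn
    fun_prop
  · rw [ae_restrict_iff' measurableSet_Ioo]
    filter_upwards with t ht
    obtain ⟨h0, h1⟩ := ht
    have hU := Upos k ⟨h0, h1⟩
    have hkR : (2:ℝ) ≤ (k:ℝ) := by exact_mod_cast hk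
    have htq : t ^ q ≤ Ufn k t := by
      apply Real.rpow_le_rpow h0.le _ hq.le
      rw [le_div_iff₀ (by linarith)]; nlinarith
    have htqpos : (0:ℝ) < t ^ q := Real.rpow_pos_of_pos h0 _
    have hnum : |(2 * (k : ℝ) + 1) * t - (k : ℝ) + 1| ≤ 3 * (k:ℝ) := by
      rw [abs_le]; constructor <;> nlinarith
    have h1' : ‖((2 * (k : ℝ) + 1) * t - (k : ℝ) + 1) / Ufn k t‖ ≤ 3 * (k:ℝ) / t ^ q := by
      rw [norm_div, Real.norm_eq_abs, Real.norm_eq_abs, abs_of_pos hU]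
      exact div_le_div₀ (by positivity) hnum htqpos htq
    calc ‖((2 * (k : ℝ) + 1) * t - (k : ℝ) + 1) / Ufn k t‖ ≤ 3 * (k:ℝ) / t ^ q := h1'
      _ = 3 * (k:ℝ) * t ^ (-q) := by rw [Real.rpow_neg h0.le, div_eq_mul_inv]
      _ ≤ ‖3 * (k:ℝ) * t ^ (-q)‖ := le_abs_self _


noncomputable def gfn (k : ℕ) (t : ℝ) : ℝ :=
  -((k : ℝ) - 1) * ((k : ℝ) + 1) / (k : ℝ) * (t * (1 - t)) / Ufn k t

lemma gderiv (k : ℕ) (hk : 2 ≤ k) {x : ℝ} (hx : x ∈ Ioo (0:ℝ) 1) :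
    HasDerivAt (gfn k)
      (((2 * (k : ℝ) + 1) * x - (k : ℝ) + 1) / Ufn k x -
        x * ((2 * (k : ℝ) + 1) * x + 3) / ((k : ℝ) * (1 + x) * Ufn k x)) x := by
  obtain ⟨h0, h1⟩ := hx
  have h1x : (1:ℝ) - x ≠ 0 := by intro h; nlinarith [h]
  have h1x' : (1:ℝ) + x ≠ 0 := by intro h; nlinarith [h]
  have hvx : 0 < x * (1 + x) / (1 - x) := vpos ⟨h0, h1⟩
  have hU : 0 < Ufn k x := Upos k ⟨h0, h1⟩
  have hkR : (2:ℝ) ≤ (k:ℝ) := by exact_mod_cast hk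
  set q : ℝ := (1 : ℝ) / ((k : ℝ) + 1) with hqdef
  set c : ℝ := -((k : ℝ) - 1) * ((k : ℝ) + 1) / (k : ℝ) with hcdef
  -- derivative of v
  have hnumv : HasDerivAt (fun t : ℝ => t * (1 + t)) (1 * (1 + x) + x * 1) x := by
    have h' := (hasDerivAt_id x).mul ((hasDerivAt_const x 1).add (hasDerivAt_id x))
    exact h'.congr_deriv (by simp)
  have hdenv : HasDerivAt (fun t : ℝ => 1 - t) (-1) x := by
    exact ((hasDerivAt_const x (1:ℝ)).sub (hasDerivAt_id x)).congr_deriv (by simp)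
  have hv : HasDerivAt (fun t : ℝ => t * (1 + t) / (1 - t))
      (((1 * (1 + x) + x * 1) * (1 - x) - x * (1 + x) * (-1)) / (1 - x) ^ 2) x :=
    hnumv.div hdenv h1x
  have hUder : HasDerivAt (fun t => Ufn k t)
      ((((1 * (1 + x) + x * 1) * (1 - x) - x * (1 + x) * (-1)) / (1 - x) ^ 2) * q *
        (x * (1 + x) / (1 - x)) ^ (q - 1)) x := by
    unfold Ufn
    exact hv.rpow_const (Or.inl hvx.ne')
  have hnum2 : HasDerivAt (fun t : ℝ => c * (t * (1 - t))) (c * (1 * (1 - x) + x * (-1))) x := by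
    have := ((hasDerivAt_id x).mul hdenv).const_mul c
    simpa using this
  have hg : HasDerivAt (gfn k)
      ((c * (1 * (1 - x) + x * (-1)) * Ufn k x - c * (x * (1 - x)) *
        ((((1 * (1 + x) + x * 1) * (1 - x) - x * (1 + x) * (-1)) / (1 - x) ^ 2) * q *
          (x * (1 + x) / (1 - x)) ^ (q - 1))) / Ufn k x ^ 2) x := by
    exact hnum2.div hUder hU.ne'
  convert hg using 1
  have hrw : (x * (1 + x) / (1 - x)) ^ (q - 1) = Ufn k x / (x * (1 + x) / (1 - x)) := by
    rw [Real.rpow_sub hvx, Real.rpow_one]; rfl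
  rw [hrw]
  have hUx : Ufn k x ≠ 0 := hU.ne'
  have hkne : ((k:ℝ)) ≠ 0 := by positivity
  have hk1 : ((k:ℝ) + 1) ≠ 0 := by positivity
  have hx0 : x ≠ 0 := h0.ne'
  rw [hqdef, hcdef]
  field_simp
  ring


noncomputable def Hfn (k : ℕ) (t : ℝ) : ℝ :=
  -((k : ℝ) - 1) * ((k : ℝ) + 1) / (k : ℝ) *
    ((1 - t) * (t ^ k * (1 - t) / (1 + t)) ^ ((1 : ℝ) / ((k : ℝ) + 1)))

lemma g_eq_H (k : ℕ) : EqOn (gfn k) (Hfn k) (Ioo 0 1) := by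
  intro t ht
  have hU := (Upos k ht).ne'
  unfold gfn Hfn
  rw [← t_div_U k ht]
  field_simp

lemma Hcont (k : ℕ) (hk : 2 ≤ k) : ContinuousOn (Hfn k) (Icc 0 1) := by
  have hq : (0:ℝ) ≤ (1 : ℝ) / ((k : ℝ) + 1) := by positivity
  have h1t : ∀ x ∈ Icc (0:ℝ) 1, (1:ℝ) + x ≠ 0 := fun x hx => by
    have := hx.1; intro h; linarith
  apply ContinuousOn.mul continuousOn_const
  apply ContinuousOn.mul (continuous_const.sub continuous_id).continuousOn
  apply ContinuousOn.rpow_const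
  · exact (((continuous_pow k).mul (continuous_const.sub continuous_id)).continuousOn).div
      (continuous_const.add continuous_id).continuousOn h1t
  · exact fun x _ => Or.inr hq

lemma H_zero (k : ℕ) (hk : 2 ≤ k) : Hfn k 0 = 0 ∧ Hfn k 1 = 0 := by
  have hqne : (((k:ℝ) + 1)⁻¹ : ℝ) ≠ 0 := by positivity
  have hk0 : k ≠ 0 := by omega
  constructor
  · simp [Hfn, zero_pow hk0, Real.zero_rpow hqne, one_div]
  · simp [Hfn]

-- sequence
noncomputable def eseq (n : ℕ) : ℝ := 1 / ((n : ℝ) + 2)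

lemma eseq_mem (n : ℕ) : eseq n ∈ Ioo (0:ℝ) 1 := by
  constructor
  · rw [eseq]; positivity
  · rw [eseq, div_lt_one (by positivity)]
    have : (0:ℝ) ≤ (n:ℝ) := Nat.cast_nonneg n
    linarith

lemma eseq_le_half (n : ℕ) : eseq n ≤ 1/2 := by
  rw [eseq]
  apply div_le_div_of_nonneg_left one_pos.le (by norm_num)
  have : (0:ℝ) ≤ (n:ℝ) := Nat.cast_nonneg n
  linarith

lemma eseq_tendsto : Tendsto eseq atTop (𝓝 0) := by
  have h : Tendsto (fun n : ℕ => ((n:ℝ) + 2)) atTop atTop :=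
    tendsto_atTop_add_const_right _ _ tendsto_natCast_atTop_atTop
  have h2 := h.inv_tendsto_atTop
  have : eseq = (fun n : ℕ => ((n:ℝ) + 2))⁻¹ := by
    funext n; simp [eseq, one_div]
  rw [this]; exact h2


lemma key_eq (k : ℕ) (hk : 2 ≤ k) :
    (∫ t in (0 : ℝ)..1, ((2 * (k : ℝ) + 1) * t - (k : ℝ) + 1) / Ufn k t) =
      (∫ t in (0 : ℝ)..1,
        t * ((2 * (k : ℝ) + 1) * t + 3) / ((k : ℝ) * (1 + t) * Ufn k t)) := by
  set F : ℝ → ℝ := fun t => ((2 * (k : ℝ) + 1) * t - (k : ℝ) + 1) / Ufn k t -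
      t * ((2 * (k : ℝ) + 1) * t + 3) / ((k : ℝ) * (1 + t) * Ufn k t) with hF
  have hsub : IntervalIntegrable F volume 0 1 := (F1int k hk).sub (F2int k hk)
  suffices h : (∫ t in (0:ℝ)..1, F t) = 0 by
    rw [hF] at h
    rw [intervalIntegral.integral_sub (F1int k hk) (F2int k hk)] at h
    linarith
  have hIoo : IntegrableOn F (Ioo 0 1) volume :=
    (intervalIntegrable_iff_integrableOn_Ioo_of_le zero_le_one).mp hsub
  set s : ℕ → Set ℝ := fun n => Ioo (eseq n) (1 - eseq n) with hs
  have hmono : Monotone s := by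
    intro m n hmn
    have h1 : eseq n ≤ eseq m := by
      unfold eseq
      apply div_le_div_of_nonneg_left one_pos.le (by positivity)
      have : (m:ℝ) ≤ (n:ℝ) := by exact_mod_cast hmn
      linarith
    exact Ioo_subset_Ioo h1 (by linarith)
  have hsub' : ∀ n, s n ⊆ Ioo (0:ℝ) 1 := fun n =>
    Ioo_subset_Ioo (eseq_mem n).1.le (by have := (eseq_mem n).1; linarith)
  have hunion : (⋃ n, s n) = Ioo (0:ℝ) 1 := by
    apply Subset.antisymm (iUnion_subset hsub')
    intro x hx
    have hmin : 0 < min x (1 - x) := lt_min hx.1 (by have := hx.2; linarith)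
    obtain ⟨n, hn⟩ := exists_nat_one_div_lt hmin
    have he : eseq n < min x (1 - x) := by
      refine lt_of_le_of_lt ?_ hn
      unfold eseq
      apply div_le_div_of_nonneg_left one_pos.le (by positivity)
      push_cast; linarith
    refine mem_iUnion.mpr ⟨n, ?_, ?_⟩
    · exact lt_of_lt_of_le he (min_le_left _ _)
    · have := lt_of_lt_of_le he (min_le_right _ _); linarith
  have hFTC : ∀ n, (∫ t in s n, F t) = gfn k (1 - eseq n) - gfn k (eseq n) := by
    intro n
    have h2 := eseq_le_half n
    have h0 := (eseq_mem n).1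
    have hle : eseq n ≤ 1 - eseq n := by linarith
    have hset : (∫ t in s n, F t) = ∫ t in (eseq n)..(1 - eseq n), F t := by
      rw [intervalIntegral.integral_of_le hle, integral_Ioc_eq_integral_Ioo]
    rw [hset]
    apply intervalIntegral.integral_eq_sub_of_hasDerivAt
    · intro x hx
      rw [uIcc_of_le hle] at hx
      exact gderiv k hk ⟨lt_of_lt_of_le h0 hx.1, lt_of_le_of_lt hx.2 (by linarith)⟩
    · apply hsub.mono_set
      rw [uIcc_of_le hle, uIcc_of_le zero_le_one]
      exact Icc_subset_Icc h0.le (by linarith)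
  have hlim1 : Tendsto (fun n => ∫ t in s n, F t) atTop (𝓝 (∫ t in Ioo (0:ℝ) 1, F t)) := by
    have := tendsto_setIntegral_of_monotone (fun n => measurableSet_Ioo) hmono
      (by rw [hunion]; exact hIoo)
    rwa [hunion] at this
  have hmem1 : ∀ n, 1 - eseq n ∈ Ioo (0:ℝ) 1 := fun n => by
    have h2 := eseq_le_half n; have h0 := (eseq_mem n).1
    constructor <;> [linarith; linarith]
  have hlim2 : Tendsto (fun n => gfn k (1 - eseq n) - gfn k (eseq n)) atTop (𝓝 (0 - 0)) := by
    apply Tendsto.sub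
    · have hH := ((Hcont k hk) 1 (by norm_num)).tendsto
      have hseq : Tendsto (fun n => 1 - eseq n) atTop (𝓝[Icc (0:ℝ) 1] 1) := by
        rw [tendsto_nhdsWithin_iff]
        refine ⟨by simpa using tendsto_const_nhds.sub eseq_tendsto, ?_⟩
        filter_upwards with n
        exact Ioo_subset_Icc_self (hmem1 n)
      have h3 := hH.comp hseq
      rw [(H_zero k hk).2] at h3
      exact h3.congr fun n => (g_eq_H k (hmem1 n)).symm
    · have hH := ((Hcont k hk) 0 (by norm_num)).tendsto
      have hseq : Tendsto eseq atTop (𝓝[Icc (0:ℝ) 1] 0) := by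
        rw [tendsto_nhdsWithin_iff]
        refine ⟨eseq_tendsto, ?_⟩
        filter_upwards with n
        exact Ioo_subset_Icc_self (eseq_mem n)
      have h3 := hH.comp hseq
      rw [(H_zero k hk).1] at h3
      exact h3.congr fun n => (g_eq_H k (eseq_mem n)).symm
  simp only [hFTC] at hlim1
  have hzero : (∫ t in Ioo (0:ℝ) 1, F t) = 0 :=
    tendsto_nhds_unique hlim1 (by simpa using hlim2)
  rw [intervalIntegral.integral_of_le zero_le_one, integral_Ioc_eq_integral_Ioo, hzero]

/-- the value `p(1)` as an integral, the integral identity, and `p(1) < 0`. -/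
theorem period_at_one_neg (k : ℕ) (hk : 2 ≤ k) :
    periodP k 1 = -2 * ∫ t in (0 : ℝ)..1, ((2 * (k : ℝ) + 1) * t - (k : ℝ) + 1) / Ufn k t ∧
    (∫ t in (0 : ℝ)..1, ((2 * (k : ℝ) + 1) * t - (k : ℝ) + 1) / Ufn k t) =
      (∫ t in (0 : ℝ)..1,
        t * ((2 * (k : ℝ) + 1) * t + 3) / ((k : ℝ) * (1 + t) * Ufn k t)) ∧
    periodP k 1 < 0 := by
  have hW : ∀ t : ℝ, Wfn k 1 t = Ufn k t := by
    intro t; unfold Wfn Ufn; norm_num [add_comm]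
  have hInt : ∀ t : ℝ, (a₀ k 1 - a₁ k * t) / Wfn k 1 t =
      -2 * (((2 * (k : ℝ) + 1) * t - (k : ℝ) + 1) / Ufn k t) := by
    intro t
    rw [hW, ← mul_div_assoc]
    congr 1
    unfold a₀ a₁
    ring
  have h1 : periodP k 1 =
      -2 * ∫ t in (0 : ℝ)..1, ((2 * (k : ℝ) + 1) * t - (k : ℝ) + 1) / Ufn k t := by
    unfold periodP
    rw [abs_one, Real.one_rpow, one_mul]
    simp only [hInt]
    rw [intervalIntegral.integral_const_mul]
  have h2 := key_eq k hk
  refine ⟨h1, h2, ?_⟩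
  have hpos : 0 < ∫ t in (0 : ℝ)..1,
      t * ((2 * (k : ℝ) + 1) * t + 3) / ((k : ℝ) * (1 + t) * Ufn k t) := by
    apply intervalIntegral_pos_of_pos_on (F2int k hk)
    · intro x hx
      obtain ⟨h0, hx1⟩ := hx
      have hU := Upos k ⟨h0, hx1⟩
      have hkR : (0:ℝ) < (k:ℝ) := by
        have : (0:ℕ) < k := by omega
        exact_mod_cast this
      apply div_pos (by positivity) (by positivity)
    · norm_num
  rw [h1, h2]
  linarith
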